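/- For every non-integer β > 1 and every point x in J_β not belonging to the exceptional null set N (points whose orbit under some composition of greedy/lazy branches has a unique expansion), distinct coin-flip sequences ω ≠ ω' ∈ {0,1}^ℕ produce distinct digit sequences: (d_i(ω,x))_{i≥1} ≠ (d_i(ω',x))_{i≥1}. Consequently such x has at least 2^{ℵ₀} distinct expansions in base β. -/

import Mathlib

open MeasureTheory Set
open scoped Classical

/-- The interval `J_β = [0, ⌊β⌋/(β-1)]`. -/
noncomputable def Jbeta (β : ℝ) : Set ℝ := Set.Icc 0 ((⌊β⌋ : ℝ) / (β - 1))

/-- The greedy digit of `x` in base `β`: equals `j` iff `x ∈ C(j)`, where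
`C(j) = [j/β, (j+1)/β)` for `j < ⌊β⌋` and `C(⌊β⌋) = [⌊β⌋/β, ⌊β⌋/(β-1)]`. -/
noncomputable def gdigit (β x : ℝ) : ℤ := min ⌊β * x⌋ ⌊β⌋

/-- The greedy map `T_β(x) = βx - d` for `x ∈ C(d)`. -/
noncomputable def gmap (β x : ℝ) : ℝ := β * x - gdigit β x

/-- The reflection `ℓ(x) = ⌊β⌋/(β-1) - x`. -/
noncomputable def lref (β x : ℝ) : ℝ := (⌊β⌋ : ℝ) / (β - 1) - x

/-- The lazy digit: the `d` with `x ∈ Δ(d) = ℓ(C(⌊β⌋ - d))`. -/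
noncomputable def ldigit (β x : ℝ) : ℤ := ⌊β⌋ - gdigit β (lref β x)

/-- The lazy map `L_β(x) = βx - d` for `x ∈ Δ(d)`. -/
noncomputable def lmap (β x : ℝ) : ℝ := β * x - ldigit β x

/-- Membership in the union of the switch regions
`S_k = [k/β, ⌊β⌋/(β(β-1)) + (k-1)/β]`, `k = 1, …, ⌊β⌋`. -/
def inSwitch (β x : ℝ) : Prop :=
  ∃ k : ℤ, 1 ≤ k ∧ k ≤ ⌊β⌋ ∧ (k : ℝ) / β ≤ x ∧
    x ≤ (⌊β⌋ : ℝ) / (β * (β - 1)) + ((k : ℝ) - 1) / β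

/-- The digit `d_1(ω,x)` assigned by the random map: the greedy digit, unless `x` is
in a switch region and the first coin is `0` (tails), in which case the lazy digit. -/
noncomputable def rdigit (β : ℝ) (ω : ℕ → Bool) (x : ℝ) : ℤ :=
  if inSwitch β x ∧ ω 0 = false then ldigit β x else gdigit β x

/-- The random β-expansion map `K_β` on `Ω × J_β`, `Ω = {0,1}^ℕ`: the coin sequence is
shifted exactly when `x` lies in a switch region. -/
noncomputable def kmap (β : ℝ) (p : (ℕ → Bool) × ℝ) : (ℕ → Bool) × ℝ :=
  ((if inSwitch β p.2 then (fun n => p.1 (n + 1)) else p.1),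
    β * p.2 - rdigit β p.1 p.2)

/-- The digit `d_{n+1}(ω,x) = d_1(K_β^n(ω,x))` of the random β-expansion. -/
noncomputable def rdig (β : ℝ) (n : ℕ) (ω : ℕ → Bool) (x : ℝ) : ℤ :=
  rdigit β ((kmap β)^[n] (ω, x)).1 ((kmap β)^[n] (ω, x)).2

/-- `a` is a β-expansion of `x` with digits in `{0, …, ⌊β⌋}`. -/
def IsExpansionOf (β x : ℝ) (a : ℕ → ℤ) : Prop :=
  (∀ i, 0 ≤ a i ∧ a i ≤ ⌊β⌋) ∧ x = ∑' i : ℕ, (a i : ℝ) / β ^ (i + 1)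

/-- The set `G` of points of `J_β` with a unique β-expansion. -/
def uniqueExpSet (β : ℝ) : Set ℝ :=
  {x | x ∈ Jbeta β ∧ ∃! a : ℕ → ℤ, IsExpansionOf β x a}

/-- The exceptional set `N = ⋃_{n≥1} {x : T_{u_1} ∘ ⋯ ∘ T_{u_n} x ∈ G for some
`u_1, …, u_n ∈ {0,1}`}`, where `T_1 = T_β` and `T_0 = L_β`. -/
noncomputable def exceptionalSet (β : ℝ) : Set ℝ :=
  {x | ∃ l : List Bool, l ≠ [] ∧
    l.foldr (fun u y => if u then gmap β y else lmap β y) x ∈ uniqueExpSet β}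

/-! Off the switch regions the greedy and lazy digits coincide, and every expansion must start
with that digit; so a point whose greedy orbit avoids the switch regions has a unique expansion.
Hence for `x ∉ N` the greedy orbit of `x` meets a switch region at a first time `n`, and up to
then the random orbit of `(ω, x)` is this greedy orbit for every `ω`, with no coin consumed.
In a switch region the lazy digit is strictly smaller than the greedy one, so the `n`-th digit
determines `ω 0`, after which both orbits continue from one point, again outside `N`, with the
shifted coins. Induction recovers every coin from the digits. -/

section Maps

variable {β x : ℝ}

lemma one_lt_floor_div_sub_one (hβ : 1 < β) : 1 < (⌊β⌋ : ℝ) / (β - 1) := by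
  rw [lt_div_iff₀ (by linarith)]
  linarith [Int.lt_floor_add_one β]

lemma mul_floor_div_sub_one (hβ : 1 < β) :
    β * ((⌊β⌋ : ℝ) / (β - 1)) = ⌊β⌋ + (⌊β⌋ : ℝ) / (β - 1) := by
  field_simp [sub_ne_zero.mpr hβ.ne']
  ring

lemma mul_lref (hβ : 1 < β) :
    β * lref β x = ⌊β⌋ + (⌊β⌋ : ℝ) / (β - 1) - β * x := by
  rw [lref, mul_sub, mul_floor_div_sub_one hβ]

lemma gdigit_le_floor : gdigit β x ≤ ⌊β⌋ := min_le_right _ _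

lemma gdigit_le_mul : (gdigit β x : ℝ) ≤ β * x :=
  (Int.cast_le.mpr (min_le_left _ _)).trans (Int.floor_le _)

lemma le_gdigit {k : ℤ} (hk : (k : ℝ) ≤ β * x) (hkβ : k ≤ ⌊β⌋) : k ≤ gdigit β x :=
  le_min (Int.le_floor.mpr hk) hkβ

lemma gdigit_nonneg (hβ : 0 ≤ β) (hx : 0 ≤ x) : 0 ≤ gdigit β x :=
  le_gdigit (by simpa using mul_nonneg hβ hx) (Int.floor_nonneg.mpr hβ)

lemma ldigit_nonneg : 0 ≤ ldigit β x :=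
  sub_nonneg.mpr gdigit_le_floor

lemma lref_mem_Jbeta (hx : x ∈ Jbeta β) : lref β x ∈ Jbeta β := by
  obtain ⟨h0, h1⟩ := hx
  constructor <;> simp only [lref] <;> linarith

lemma ldigit_le_floor (hβ : 0 ≤ β) (hx : x ∈ Jbeta β) : ldigit β x ≤ ⌊β⌋ :=
  sub_le_self _ (gdigit_nonneg hβ (lref_mem_Jbeta hx).1)

lemma gmap_mem_Jbeta (hβ : 1 < β) (hx : x ∈ Jbeta β) : gmap β x ∈ Jbeta β := by
  obtain ⟨h0, h1⟩ := hx
  refine ⟨sub_nonneg.mpr gdigit_le_mul, ?_⟩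
  rcases min_cases ⌊β * x⌋ ⌊β⌋ with ⟨he, -⟩ | ⟨he, -⟩ <;> rw [gmap, gdigit, he]
  · linarith [Int.lt_floor_add_one (β * x), one_lt_floor_div_sub_one hβ]
  · linarith [mul_le_mul_of_nonneg_left h1 (by linarith : 0 ≤ β), mul_floor_div_sub_one hβ]

lemma lmap_eq_lref_gmap_lref (hβ : 1 < β) : lmap β x = lref β (gmap β (lref β x)) := by
  simp only [lmap, ldigit, gmap, lref, Int.cast_sub]
  field_simp [sub_ne_zero.mpr hβ.ne']
  ring

lemma lmap_mem_Jbeta (hβ : 1 < β) (hx : x ∈ Jbeta β) : lmap β x ∈ Jbeta β := by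
  rw [lmap_eq_lref_gmap_lref hβ]
  exact lref_mem_Jbeta (gmap_mem_Jbeta hβ (lref_mem_Jbeta hx))

end Maps

section Switch

variable {β x : ℝ}

lemma floor_div_mul_sub_one :
    (⌊β⌋ : ℝ) / (β * (β - 1)) = (⌊β⌋ : ℝ) / (β - 1) / β := by
  rw [div_div, mul_comm]

lemma inSwitch_iff_exists_mul (hβ : 0 < β) :
    inSwitch β x ↔ ∃ k : ℤ, 1 ≤ k ∧ k ≤ ⌊β⌋ ∧ (k : ℝ) ≤ β * x ∧
      β * x ≤ (⌊β⌋ : ℝ) / (β - 1) + (k - 1) := by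
  have hdiv (k : ℝ) : (⌊β⌋ : ℝ) / (β * (β - 1)) + (k - 1) / β
      = ((⌊β⌋ : ℝ) / (β - 1) + (k - 1)) / β := by
    rw [floor_div_mul_sub_one, add_div]
  simp only [inSwitch, hdiv, div_le_iff₀ hβ, le_div_iff₀ hβ, mul_comm x β]

lemma inSwitch_iff_ldigit_lt_gdigit (hβ : 1 < β) :
    inSwitch β x ↔ ldigit β x < gdigit β x := by
  rw [inSwitch_iff_exists_mul (by linarith)]
  have hl := mul_lref (x := x) hβ
  constructor
  · rintro ⟨k, hk1, hkβ, hkx, hxk⟩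
    have hg : k ≤ gdigit β x := le_gdigit hkx hkβ
    have hgl : ⌊β⌋ - k + 1 ≤ gdigit β (lref β x) :=
      le_gdigit (by push_cast; linarith) (by omega)
    rw [ldigit]
    omega
  · intro hlt
    refine ⟨ldigit β x + 1, by linarith [ldigit_nonneg (β := β) (x := x)],
      by linarith [gdigit_le_floor (β := β) (x := x)], ?_, ?_⟩
    · exact (Int.cast_le.mpr hlt).trans gdigit_le_mul
    · have := gdigit_le_mul (β := β) (x := lref β x)
      simp only [ldigit, Int.cast_sub, Int.cast_add, Int.cast_one] at this ⊢
      linarith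

end Switch

section Expansion

variable {β x : ℝ} {a : ℕ → ℤ}

lemma hasSum_floor_div_pow (hβ : 1 < β) :
    HasSum (fun i : ℕ => (⌊β⌋ : ℝ) / β ^ (i + 1)) ((⌊β⌋ : ℝ) / (β - 1)) := by
  have hβ0 : β ≠ 0 := by positivity
  have h := (hasSum_geometric_of_lt_one (inv_nonneg.mpr (by linarith))
    (inv_lt_one_of_one_lt₀ hβ)).mul_left ((⌊β⌋ : ℝ) / β)
  have hval : (⌊β⌋ : ℝ) / (β - 1) = ⌊β⌋ / β * (1 - β⁻¹)⁻¹ := by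
    field_simp [sub_ne_zero.mpr hβ.ne']
  rw [hval]
  refine h.congr_fun fun i => ?_
  rw [inv_pow, pow_succ]
  field_simp

lemma IsExpansionOf.hasSum (hβ : 1 < β) (ha : IsExpansionOf β x a) :
    HasSum (fun i => (a i : ℝ) / β ^ (i + 1)) x := by
  have hs : Summable (fun i => (a i : ℝ) / β ^ (i + 1)) :=
    (hasSum_floor_div_pow hβ).summable.of_nonneg_of_le
      (fun i => div_nonneg (by exact_mod_cast (ha.1 i).1) (by positivity))
      (fun i => div_le_div_of_nonneg_right (by exact_mod_cast (ha.1 i).2) (by positivity))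
  exact ha.2 ▸ hs.hasSum

lemma IsExpansionOf.mem_Jbeta (hβ : 1 < β) (ha : IsExpansionOf β x a) : x ∈ Jbeta β :=
  ⟨(ha.hasSum hβ).nonneg fun i => div_nonneg (by exact_mod_cast (ha.1 i).1) (by positivity),
    hasSum_le (fun i => div_le_div_of_nonneg_right (by exact_mod_cast (ha.1 i).2) (by positivity))
      (ha.hasSum hβ) (hasSum_floor_div_pow hβ)⟩

lemma IsExpansionOf.tail (hβ : 1 < β) (ha : IsExpansionOf β x a) :
    IsExpansionOf β (β * x - a 0) (fun i => a (i + 1)) := by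
  have hβ0 : β ≠ 0 := by positivity
  refine ⟨fun i => ha.1 (i + 1), ?_⟩
  have h := ((hasSum_nat_add_iff' 1).mpr (ha.hasSum hβ)).mul_left β
  convert h.tsum_eq.symm using 1
  · simp only [Finset.sum_range_one, zero_add, pow_one]
    field_simp
  · congr 1
    funext i
    rw [pow_succ _ (i + 1)]
    field_simp

lemma IsExpansionOf.head_le_gdigit (hβ : 1 < β) (ha : IsExpansionOf β x a) :
    a 0 ≤ gdigit β x :=
  le_gdigit (by linarith [((ha.tail hβ).mem_Jbeta hβ).1]) (ha.1 0).2

lemma IsExpansionOf.ldigit_le_head (hβ : 1 < β) (ha : IsExpansionOf β x a) :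
    ldigit β x ≤ a 0 := by
  have htail := ((ha.tail hβ).mem_Jbeta hβ).2
  have h : ⌊β⌋ - a 0 ≤ gdigit β (lref β x) :=
    le_gdigit (by push_cast; linarith [mul_lref (x := x) hβ]) (by linarith [(ha.1 0).1])
  rw [ldigit]
  omega

lemma IsExpansionOf.head_eq_gdigit (hβ : 1 < β) (ha : IsExpansionOf β x a)
    (hs : ¬ inSwitch β x) : a 0 = gdigit β x := by
  rw [inSwitch_iff_ldigit_lt_gdigit hβ] at hs
  have := ha.ldigit_le_head hβ
  have := ha.head_le_gdigit hβ
  omega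

lemma IsExpansionOf.eq_gdigit_gmap_iterate (hβ : 1 < β) (ha : IsExpansionOf β x a)
    (hs : ∀ m, ¬ inSwitch β ((gmap β)^[m] x)) (i : ℕ) :
    a i = gdigit β ((gmap β)^[i] x) := by
  induction i generalizing x a with
  | zero => exact ha.head_eq_gdigit hβ (hs 0)
  | succ i ih =>
    have htail : IsExpansionOf β (gmap β x) (fun i => a (i + 1)) := by
      simpa only [gmap, ha.head_eq_gdigit hβ (hs 0)] using ha.tail hβ
    exact ih htail fun m => by simpa only [Function.iterate_succ_apply] using hs (m + 1)

end Expansion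

section RandomOrbit

open Filter Topology

variable {β x : ℝ} {ω : ℕ → Bool}

lemma rdigit_eq_gdigit_or_ldigit (β : ℝ) (ω : ℕ → Bool) (x : ℝ) :
    rdigit β ω x = gdigit β x ∨ rdigit β ω x = ldigit β x := by
  unfold rdigit
  split_ifs <;> simp

lemma rdigit_mem_Icc (hβ : 1 < β) (hx : x ∈ Jbeta β) :
    0 ≤ rdigit β ω x ∧ rdigit β ω x ≤ ⌊β⌋ := by
  rcases rdigit_eq_gdigit_or_ldigit β ω x with h | h <;> rw [h]
  exacts [⟨gdigit_nonneg (by linarith) hx.1, gdigit_le_floor⟩,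
    ⟨ldigit_nonneg, ldigit_le_floor (by linarith) hx⟩]

lemma kmap_snd_eq_gmap_or_lmap (β : ℝ) (ω : ℕ → Bool) (x : ℝ) :
    (kmap β (ω, x)).2 = gmap β x ∨ (kmap β (ω, x)).2 = lmap β x := by
  rcases rdigit_eq_gdigit_or_ldigit β ω x with h | h <;> simp [kmap, gmap, lmap, h]

lemma kmap_iterate_snd_mem_Jbeta (hβ : 1 < β) (hx : x ∈ Jbeta β) (n : ℕ) :
    ((kmap β)^[n] (ω, x)).2 ∈ Jbeta β := by
  induction n generalizing ω x with
  | zero => exact hx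
  | succ n ih =>
    rw [Function.iterate_succ_apply]
    refine ih (x := (kmap β (ω, x)).2) (ω := (kmap β (ω, x)).1) ?_
    rcases kmap_snd_eq_gmap_or_lmap β ω x with h | h <;> rw [h]
    exacts [gmap_mem_Jbeta hβ hx, lmap_mem_Jbeta hβ hx]

lemma kmap_iterate_succ_snd (n : ℕ) :
    ((kmap β)^[n + 1] (ω, x)).2 = β * ((kmap β)^[n] (ω, x)).2 - rdig β n ω x := by
  rw [Function.iterate_succ_apply']
  rfl

lemma sum_rdig_div_pow (hβ : 0 < β) (n : ℕ) :
    ∑ i ∈ Finset.range n, (rdig β i ω x : ℝ) / β ^ (i + 1)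
      = x - ((kmap β)^[n] (ω, x)).2 / β ^ n := by
  induction n with
  | zero => simp
  | succ n ih =>
    rw [Finset.sum_range_succ, ih, kmap_iterate_succ_snd]
    field_simp
    ring

lemma isExpansionOf_rdig (hβ : 1 < β) (hx : x ∈ Jbeta β) (ω : ℕ → Bool) :
    IsExpansionOf β x (fun i => rdig β i ω x) := by
  have hβ0 : 0 < β := by linarith
  have hmem := kmap_iterate_snd_mem_Jbeta (ω := ω) hβ hx
  refine ⟨fun i => rdigit_mem_Icc hβ (hmem i), ?_⟩
  have hnn (i : ℕ) : 0 ≤ (rdig β i ω x : ℝ) / β ^ (i + 1) :=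
    div_nonneg (by exact_mod_cast (rdigit_mem_Icc hβ (hmem i)).1) (by positivity)
  refine ((hasSum_iff_tendsto_nat_of_nonneg hnn x).mpr ?_).tsum_eq.symm
  simp only [sum_rdig_div_pow hβ0]
  have hgeom := (tendsto_pow_atTop_nhds_zero_of_lt_one (inv_nonneg.mpr hβ0.le)
    (inv_lt_one_of_one_lt₀ hβ)).const_mul ((⌊β⌋ : ℝ) / (β - 1))
  rw [mul_zero] at hgeom
  have hrem : Tendsto (fun n => ((kmap β)^[n] (ω, x)).2 / β ^ n) atTop (𝓝 0) := by
    refine squeeze_zero (fun n => div_nonneg (hmem n).1 (by positivity)) (fun n => ?_) hgeom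
    rw [div_eq_mul_inv, ← inv_pow]
    exact mul_le_mul_of_nonneg_right (hmem n).2 (by positivity)
  simpa using tendsto_const_nhds.sub hrem

end RandomOrbit

section Exceptional

variable {β x : ℝ}

lemma mem_uniqueExpSet_of_forall_not_inSwitch (hβ : 1 < β) (hx : x ∈ Jbeta β)
    (hs : ∀ m, ¬ inSwitch β ((gmap β)^[m] x)) : x ∈ uniqueExpSet β := by
  refine ⟨hx, _, isExpansionOf_rdig hβ hx (fun _ => true), fun a ha => funext fun i => ?_⟩
  rw [ha.eq_gdigit_gmap_iterate hβ hs,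
    (isExpansionOf_rdig hβ hx _).eq_gdigit_gmap_iterate hβ hs]

lemma exists_inSwitch_gmap_iterate (hβ : 1 < β) (hx : x ∈ Jbeta β)
    (hxN : x ∉ exceptionalSet β) : ∃ m, inSwitch β ((gmap β)^[m] x) := by
  by_contra! hs
  refine hxN ⟨[true], List.cons_ne_nil _ _, ?_⟩
  exact mem_uniqueExpSet_of_forall_not_inSwitch (x := gmap β x) hβ (gmap_mem_Jbeta hβ hx) fun m => by
    simpa only [Function.iterate_succ_apply] using hs (m + 1)

lemma mem_exceptionalSet_of_step (u : Bool)
    (h : (if u then gmap β x else lmap β x) ∈ exceptionalSet β) : x ∈ exceptionalSet β := by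
  obtain ⟨l, -, hG⟩ := h
  exact ⟨l ++ [u], by simp, by simpa only [List.foldr_append, List.foldr_cons, List.foldr_nil] using hG⟩

lemma kmap_iterate_snd_not_mem_exceptionalSet {ω : ℕ → Bool} (hxN : x ∉ exceptionalSet β)
    (n : ℕ) : ((kmap β)^[n] (ω, x)).2 ∉ exceptionalSet β := by
  induction n generalizing ω x with
  | zero => exact hxN
  | succ n ih =>
    rw [Function.iterate_succ_apply]
    refine ih (x := (kmap β (ω, x)).2) (ω := (kmap β (ω, x)).1) fun hN => hxN ?_
    rcases kmap_snd_eq_gmap_or_lmap β ω x with h | h <;> rw [h] at hN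
    exacts [mem_exceptionalSet_of_step true hN, mem_exceptionalSet_of_step false hN]

end Exceptional

section Injectivity

variable {β x : ℝ} {ω ω' : ℕ → Bool}

lemma kmap_of_not_inSwitch (h : ¬ inSwitch β x) (ω : ℕ → Bool) :
    kmap β (ω, x) = (ω, gmap β x) := by
  simp [kmap, rdigit, gmap, h]

lemma kmap_of_inSwitch (h : inSwitch β x) (ω : ℕ → Bool) :
    kmap β (ω, x) = (fun k => ω (k + 1), β * x - rdigit β ω x) := by
  simp [kmap, h]

lemma kmap_iterate_of_forall_lt_not_inSwitch {n : ℕ}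
    (h : ∀ m < n, ¬ inSwitch β ((gmap β)^[m] x)) (ω : ℕ → Bool) :
    (kmap β)^[n] (ω, x) = (ω, (gmap β)^[n] x) := by
  induction n with
  | zero => rfl
  | succ n ih =>
    rw [Function.iterate_succ_apply', ih fun m hm => h m (by omega),
      kmap_of_not_inSwitch (h n n.lt_succ_self), Function.iterate_succ_apply']

lemma rdig_add (i n : ℕ) (ω : ℕ → Bool) (x : ℝ) :
    rdig β (i + n) ω x = rdig β i ((kmap β)^[n] (ω, x)).1 ((kmap β)^[n] (ω, x)).2 := by
  simp only [rdig, Function.iterate_add_apply]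

lemma coin_eq_of_rdigit_eq (hβ : 1 < β) (h : inSwitch β x)
    (he : rdigit β ω x = rdigit β ω' x) : ω 0 = ω' 0 := by
  have hlt := (inSwitch_iff_ldigit_lt_gdigit hβ).mp h
  simp only [rdigit, h, true_and] at he
  revert he
  cases ω 0 <;> cases ω' 0 <;> simp <;> omega

lemma head_eq_and_exists_tail_rdig_eq (hβ : 1 < β) (hx : x ∈ Jbeta β)
    (hxN : x ∉ exceptionalSet β) (he : ∀ i, rdig β i ω x = rdig β i ω' x) :
    ω 0 = ω' 0 ∧ ∃ z ∈ Jbeta β, z ∉ exceptionalSet β ∧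
      ∀ i, rdig β i (fun k => ω (k + 1)) z = rdig β i (fun k => ω' (k + 1)) z := by
  have hex := exists_inSwitch_gmap_iterate hβ hx hxN
  set n := Nat.find hex
  set y := (gmap β)^[n] x
  have hy : inSwitch β y := Nat.find_spec hex
  have horbit (ω : ℕ → Bool) : (kmap β)^[n] (ω, x) = (ω, y) :=
    kmap_iterate_of_forall_lt_not_inSwitch (fun m hm => Nat.find_min hex hm) ω
  have hhead : ω 0 = ω' 0 :=
    coin_eq_of_rdigit_eq hβ hy (by simpa only [rdig, horbit] using he n)
  have hstep (ω : ℕ → Bool) :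
      (kmap β)^[n + 1] (ω, x) = (fun k => ω (k + 1), β * y - rdigit β ω y) := by
    rw [Function.iterate_succ_apply', horbit, kmap_of_inSwitch hy]
  have hdigit : rdigit β ω y = rdigit β ω' y := by simp only [rdigit, hhead]
  refine ⟨hhead, β * y - rdigit β ω y, ?_, ?_, fun i => ?_⟩
  · simpa only [hstep] using kmap_iterate_snd_mem_Jbeta (ω := ω) hβ hx (n + 1)
  · simpa only [hstep] using kmap_iterate_snd_not_mem_exceptionalSet (ω := ω) hxN (n + 1)
  · simpa only [rdig_add, hstep, hdigit] using he (i + (n + 1))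

lemma coin_eq_of_forall_rdig_eq (hβ : 1 < β) (k : ℕ) (hx : x ∈ Jbeta β)
    (hxN : x ∉ exceptionalSet β) (he : ∀ i, rdig β i ω x = rdig β i ω' x) : ω k = ω' k := by
  induction k generalizing ω ω' x with
  | zero => exact (head_eq_and_exists_tail_rdig_eq hβ hx hxN he).1
  | succ k ih =>
    obtain ⟨-, z, hz, hzN, hze⟩ := head_eq_and_exists_tail_rdig_eq hβ hx hxN he
    exact ih hz hzN hze

lemma rdig_injective (hβ : 1 < β) (hx : x ∈ Jbeta β) (hxN : x ∉ exceptionalSet β) :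
    Function.Injective fun ω i => rdig β i ω x :=
  fun _ _ h => funext fun k => coin_eq_of_forall_rdig_eq hβ k hx hxN (congrFun h)

end Injectivity

theorem continuum_many_expansions_general (β : ℝ) (hβ : 1 < β)
    (x : ℝ) (hx : x ∈ Jbeta β) (hxN : x ∉ exceptionalSet β) :
    (∀ ω ω' : ℕ → Bool, ω ≠ ω' →
      (fun i => rdig β i ω x) ≠ (fun i => rdig β i ω' x)) ∧
      Cardinal.continuum ≤ Cardinal.mk {a : ℕ → ℤ // IsExpansionOf β x a} := by
  have hinj := rdig_injective hβ hx hxN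
  refine ⟨fun _ _ hne => hinj.ne hne, ?_⟩
  calc Cardinal.continuum = Cardinal.mk (ℕ → Bool) := by simp
    _ ≤ Cardinal.mk {a : ℕ → ℤ // IsExpansionOf β x a} :=
      Cardinal.mk_le_of_injective (f := fun ω => ⟨_, isExpansionOf_rdig hβ hx ω⟩)
        fun _ _ h => hinj (congrArg Subtype.val h)

/-- for `x ∈ J_β \ N`, distinct coin sequences produce distinct digit
sequences; consequently `x` has at least `2^ℵ₀` distinct expansions in base `β`. -/
theorem continuum_many_expansions (β : ℝ) (hβ : 1 < β) (hni : ¬ ∃ m : ℤ, β = (m : ℝ))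
    (x : ℝ) (hx : x ∈ Jbeta β) (hxN : x ∉ exceptionalSet β) :
    (∀ ω ω' : ℕ → Bool, ω ≠ ω' →
      (fun i => rdig β i ω x) ≠ (fun i => rdig β i ω' x)) ∧
      Cardinal.continuum ≤ Cardinal.mk {a : ℕ → ℤ // IsExpansionOf β x a} :=
  continuum_many_expansions_general β hβ x hx hxN
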